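/- For every real l with 0 ≤ l ≤ 1, the 4-dimensional Lebesgue measure of the set {((x₁,y₁),(x₂,y₂)) ∈ [0,1]⁴ : (x₁−x₂)² + (y₁−y₂)² ≤ l²} equals π·l² − (8/3)·l³ + l⁴/2. (Equivalently, the cumulative distribution function of the distance between two independent uniform points of the unit square is π·l² − (8/3)·l³ + l⁴/2 on [0,1], whose derivative is the Ghosh density 2πl − 8l² + 2l³.) -/

import Mathlib

/-!
If `X, Y` are independent and uniform on `[0, 1]`, then `X - Y` has the triangular density
`(1 - |u|)⁺`. Hence the difference vector of two independent uniform points of the unit square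
has law `ν ⊗ ν` with `ν` triangular, and the measure in question is the `ν ⊗ ν`-mass of the disk
of radius `l`. For `l ≤ 1` the vertical chord of that disk at abscissa `u` has half-length
`s = √(l² - u²) ≤ 1` and `ν`-mass `2s - s²`; integrating this against `1 - |u|` over `[-l, l]`,
with `∫₀ˡ √(l² - u²) du = π l² / 4`, gives `π l² - 8 l³ / 3 + l⁴ / 2`.
-/

open MeasureTheory Real Set

open scoped ENNReal

theorem MeasureTheory.measurePreserving_prodProdProdComm {α β γ δ : Type*} [MeasurableSpace α]
    [MeasurableSpace β] [MeasurableSpace γ] [MeasurableSpace δ] (μa : Measure α) (μb : Measure β)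
    (μc : Measure γ) (μd : Measure δ) [SFinite μa] [SFinite μb] [SFinite μc] [SFinite μd] :
    MeasurePreserving (Equiv.prodProdProdComm α β γ δ) ((μa.prod μb).prod (μc.prod μd))
      ((μa.prod μc).prod (μb.prod μd)) := by
  have swap_first_two : MeasurePreserving (fun q : β × γ × δ => (q.2.1, q.1, q.2.2))
      (μb.prod (μc.prod μd)) (μc.prod (μb.prod μd)) :=
    (measurePreserving_prodAssoc μc μb μd).comp <|
      (MeasurePreserving.prod Measure.measurePreserving_swap (.id μd)).comp
        ((measurePreserving_prodAssoc μb μc μd).symm _)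
  exact ((measurePreserving_prodAssoc μa μc (μb.prod μd)).symm _).comp <|
    ((MeasurePreserving.id μa).prod swap_first_two).comp
      (measurePreserving_prodAssoc μa μb (μc.prod μd))

theorem intervalIntegral.integral_comp_abs_symm {g : ℝ → ℝ} (hg : Continuous g) {a : ℝ}
    (ha : 0 ≤ a) : ∫ u in -a..a, g |u| = 2 * ∫ u in 0..a, g u := by
  have hga : Continuous fun u => g |u| := hg.comp continuous_abs
  have abs_eq : ∫ u in 0..a, g |u| = ∫ u in 0..a, g u :=
    integral_congr fun u hu => by rw [abs_of_nonneg (uIcc_of_le ha ▸ hu).1]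
  have left_eq : ∫ u in -a..0, g |u| = ∫ u in 0..a, g |u| := by
    simpa only [abs_neg, neg_zero] using (integral_comp_neg (a := 0) (b := a) fun u => g |u|).symm
  rw [← integral_add_adjacent_intervals (hga.intervalIntegrable _ 0) (hga.intervalIntegrable 0 _),
    left_eq, abs_eq, two_mul]

theorem integral_sqrt_sq_sub_sq {r : ℝ} (hr : 0 ≤ r) :
    ∫ u in (0 : ℝ)..r, √(r ^ 2 - u ^ 2) = π * r ^ 2 / 4 := by
  rcases hr.eq_or_lt with rfl | hr
  · simp
  have hsymm : ∫ u in -r..r, √(r ^ 2 - u ^ 2) = r ^ 2 * (π / 2) := by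
    have hsub := intervalIntegral.integral_comp_mul_left (fun u => √(r ^ 2 - u ^ 2)) hr.ne'
      (a := -1) (b := 1)
    have hfactor (x : ℝ) : √(r ^ 2 - (r * x) ^ 2) = r * √(1 - x ^ 2) := by
      rw [show r ^ 2 - (r * x) ^ 2 = r ^ 2 * (1 - x ^ 2) by ring, sqrt_mul (sq_nonneg r),
        sqrt_sq hr.le]
    simp only [hfactor, intervalIntegral.integral_const_mul, integral_sqrt_one_sub_sq, mul_neg,
      mul_one, smul_eq_mul] at hsub
    field_simp at hsub
    linarith
  have heven := intervalIntegral.integral_comp_abs_symm (g := fun t => √(r ^ 2 - t ^ 2))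
    (by fun_prop) hr.le
  simp only [sq_abs] at heven
  linarith

theorem hasDerivAt_sq_sub_sq_rpow_three_halves (l u : ℝ) :
    HasDerivAt (fun u : ℝ => (l ^ 2 - u ^ 2) ^ (3 / 2 : ℝ)) (-3 * u * √(l ^ 2 - u ^ 2)) u := by
  have hinner : HasDerivAt (fun u : ℝ => l ^ 2 - u ^ 2) (-(2 * u)) u := by
    simpa using (hasDerivAt_pow 2 u).const_sub (l ^ 2)
  convert hinner.rpow_const (p := 3 / 2) (Or.inr (by norm_num)) using 1
  rw [sqrt_eq_rpow, show (3 / 2 : ℝ) - 1 = 1 / 2 by norm_num]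
  ring

theorem integral_one_sub_mul_two_sqrt_sub_sq {l : ℝ} (hl : 0 ≤ l) :
    ∫ u in (0 : ℝ)..l, (1 - u) * (2 * √(l ^ 2 - u ^ 2) - √(l ^ 2 - u ^ 2) ^ 2)
      = π * l ^ 2 / 2 - 4 / 3 * l ^ 3 + l ^ 4 / 4 := by
  have hsplit : ∀ u ∈ uIcc 0 l, (1 - u) * (2 * √(l ^ 2 - u ^ 2) - √(l ^ 2 - u ^ 2) ^ 2)
      = 2 * √(l ^ 2 - u ^ 2) - (2 * u * √(l ^ 2 - u ^ 2) + (1 - u) * (l ^ 2 - u ^ 2)) := by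
    intro u hu
    rw [uIcc_of_le hl] at hu
    rw [sq_sqrt (by nlinarith [hu.1, hu.2])]
    ring
  have hrest : ∫ u in (0 : ℝ)..l, (2 * u * √(l ^ 2 - u ^ 2) + (1 - u) * (l ^ 2 - u ^ 2))
      = 4 / 3 * l ^ 3 - l ^ 4 / 4 := by
    have hderiv (u : ℝ) : HasDerivAt
        (fun u : ℝ => -(2 / 3) * (l ^ 2 - u ^ 2) ^ (3 / 2 : ℝ)
          + (l ^ 2 * u - l ^ 2 * u ^ 2 / 2 - u ^ 3 / 3 + u ^ 4 / 4))
        (2 * u * √(l ^ 2 - u ^ 2) + (1 - u) * (l ^ 2 - u ^ 2)) u := by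
      refine (((hasDerivAt_sq_sub_sq_rpow_three_halves l u).const_mul _).add
        (((((hasDerivAt_id u).const_mul (l ^ 2)).sub
          (((hasDerivAt_pow 2 u).const_mul (l ^ 2)).div_const 2)).sub
          ((hasDerivAt_pow 3 u).div_const 3)).add
          ((hasDerivAt_pow 4 u).div_const 4))).congr_deriv ?_
      ring
    have hl3 : (l ^ 2) ^ (3 / 2 : ℝ) = l ^ 3 := by
      rw [← rpow_natCast l 2, ← rpow_mul hl]
      norm_num
    rw [intervalIntegral.integral_eq_sub_of_hasDerivAt (fun u _ => hderiv u)
      (by apply Continuous.intervalIntegrable; fun_prop)]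
    norm_num [hl3]
    ring
  rw [intervalIntegral.integral_congr hsplit,
    intervalIntegral.integral_sub (by apply Continuous.intervalIntegrable; fun_prop)
      (by apply Continuous.intervalIntegrable; fun_prop),
    intervalIntegral.integral_const_mul, integral_sqrt_sq_sub_sq hl, hrest]
  ring

theorem volume_preimage_const_add_Icc_inter (u : ℝ) :
    volume ((u + ·) ⁻¹' Icc 0 1 ∩ Icc (0 : ℝ) 1) = ENNReal.ofReal (1 - |u|) := by
  rw [preimage_const_add_Icc, Icc_inter_Icc, volume_Icc]
  rcases le_total 0 u with hu | hu
  · rw [abs_of_nonneg hu, max_eq_right (by linarith), min_eq_left (by linarith), sub_zero]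
  · rw [abs_of_nonpos hu, max_eq_left (by linarith), min_eq_right (by linarith), zero_sub,
      sub_neg_eq_add]

noncomputable def triangularMeasure : Measure ℝ :=
  volume.withDensity fun u => ENNReal.ofReal (1 - |u|)

theorem map_sub_prod_restrict_Icc :
    ((volume.restrict (Icc (0 : ℝ) 1)).prod (volume.restrict (Icc (0 : ℝ) 1))).map
      (fun p => p.1 - p.2) = triangularMeasure := by
  refine Measure.ext_of_lintegral _ fun f hf => ?_
  have translate (b : ℝ) : ∫⁻ a in Icc 0 1, f (a - b)
      = ∫⁻ u, ((u + ·) ⁻¹' Icc 0 1).indicator 1 b * f u := by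
    rw [← lintegral_indicator measurableSet_Icc, ← lintegral_add_right_eq_self _ b]
    refine lintegral_congr fun u => ?_
    by_cases h : u + b ∈ Icc (0 : ℝ) 1
    · rw [indicator_of_mem h, indicator_of_mem (show b ∈ (u + ·) ⁻¹' Icc 0 1 from h),
        add_sub_cancel_right, Pi.one_apply, one_mul]
    · rw [indicator_of_notMem h, indicator_of_notMem (show b ∉ (u + ·) ⁻¹' Icc 0 1 from h),
        zero_mul]
  rw [lintegral_map hf measurable_sub, triangularMeasure,
    lintegral_withDensity_eq_lintegral_mul _ (by fun_prop) hf,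
    lintegral_prod_symm (fun p : ℝ × ℝ => f (p.1 - p.2)) (hf.comp measurable_sub).aemeasurable]
  simp_rw [translate]
  have hsum : MeasurableSet {q : ℝ × ℝ | q.1 + q.2 ∈ Icc (0 : ℝ) 1} :=
    measurableSet_Icc.preimage (by fun_prop)
  rw [lintegral_lintegral_swap ((((measurable_one.indicator hsum).comp measurable_swap).mul
    (hf.comp measurable_snd)).aemeasurable)]
  refine lintegral_congr fun u => ?_
  have hu : MeasurableSet ((u + ·) ⁻¹' Icc (0 : ℝ) 1) := measurableSet_Icc.preimage (by fun_prop)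
  rw [lintegral_mul_const _ (measurable_one.indicator hu), lintegral_indicator_one hu,
    Measure.restrict_apply hu, volume_preimage_const_add_Icc_inter]
  rfl

instance : IsProbabilityMeasure triangularMeasure := by
  have : IsProbabilityMeasure (volume.restrict (Icc (0 : ℝ) 1)) := ⟨by simp⟩
  rw [← map_sub_prod_restrict_Icc]
  exact Measure.isProbabilityMeasure_map (by fun_prop)

theorem triangularMeasure_Icc_neg {s : ℝ} (hs0 : 0 ≤ s) (hs1 : s ≤ 1) :
    triangularMeasure (Icc (-s) s) = ENNReal.ofReal (2 * s - s ^ 2) := by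
  have hcont : Continuous fun v : ℝ => 1 - |v| := by fun_prop
  rw [triangularMeasure, withDensity_apply _ measurableSet_Icc,
    ← ofReal_integral_eq_lintegral_ofReal hcont.integrableOn_Icc]
  · rw [integral_Icc_eq_integral_Ioc, ← intervalIntegral.integral_of_le (by linarith),
      intervalIntegral.integral_comp_abs_symm (g := fun t => 1 - t) (by fun_prop) hs0,
      intervalIntegral.integral_sub intervalIntegrable_const
        intervalIntegral.intervalIntegrable_id]
    simp only [intervalIntegral.integral_const, integral_id, smul_eq_mul]
    congr 1
    ring
  · refine (ae_restrict_iff' measurableSet_Icc).2 (ae_of_all _ fun v hv => ?_)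
    have : |v| ≤ 1 := abs_le.2 ⟨by linarith [hv.1], by linarith [hv.2]⟩
    simp only [Pi.zero_apply]
    linarith

-- For `c < u ^ 2` the slice is empty and `√(c - u ^ 2) = 0`, so one formula covers every `u`.
theorem triangularMeasure_setOf_sq_add_sq_le {c : ℝ} (hc : c ≤ 1) (u : ℝ) :
    triangularMeasure {v | u ^ 2 + v ^ 2 ≤ c}
      = ENNReal.ofReal (2 * √(c - u ^ 2) - √(c - u ^ 2) ^ 2) := by
  by_cases hu : u ^ 2 ≤ c
  · have hslice : {v | u ^ 2 + v ^ 2 ≤ c} = Icc (-√(c - u ^ 2)) √(c - u ^ 2) := by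
      ext v
      rw [mem_ofPred_eq, ← le_sub_iff_add_le', Real.sq_le (by linarith), mem_Icc]
    rw [hslice, triangularMeasure_Icc_neg (sqrt_nonneg _) (sqrt_le_one.2 (by nlinarith))]
  · have hslice : {v | u ^ 2 + v ^ 2 ≤ c} = ∅ :=
      eq_empty_of_forall_notMem fun v hv => hu (by nlinarith [sq_nonneg v, hv.out])
    rw [hslice, sqrt_eq_zero'.2 (by linarith)]
    simp

theorem triangularMeasure_prod_setOf_sq_add_sq_le {l : ℝ} (h0 : 0 ≤ l) (h1 : l ≤ 1) :
    (triangularMeasure.prod triangularMeasure) {q : ℝ × ℝ | q.1 ^ 2 + q.2 ^ 2 ≤ l ^ 2}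
      = ENNReal.ofReal (π * l ^ 2 - (8 / 3) * l ^ 3 + l ^ 4 / 2) := by
  set slice : ℝ → ℝ := fun u => 2 * √(l ^ 2 - u ^ 2) - √(l ^ 2 - u ^ 2) ^ 2
  have hslice_nonneg (u : ℝ) : 0 ≤ slice u := by
    have hs1 : √(l ^ 2 - u ^ 2) ≤ 1 := sqrt_le_one.2 (by nlinarith)
    nlinarith [sqrt_nonneg (l ^ 2 - u ^ 2)]
  have hcont : Continuous fun u => (1 - |u|) * slice u := by fun_prop
  have hsupp : (fun u => ENNReal.ofReal ((1 - |u|) * slice u)).support ⊆ Icc (-l) l := by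
    refine Function.support_subset_iff'.2 fun u hu => ?_
    have hlu : l ^ 2 - u ^ 2 ≤ 0 := by
      have : l < |u| := by
        by_contra! h
        exact hu (abs_le.1 h)
      nlinarith [sq_abs u]
    simp [slice, sqrt_eq_zero'.2 hlu]
  have hnonneg : ∀ u ∈ Icc (-l) l, 0 ≤ (1 - |u|) * slice u := fun u hu =>
    mul_nonneg (by linarith [abs_le.2 hu]) (hslice_nonneg u)
  rw [Measure.prod_apply (measurableSet_le (by fun_prop) (by fun_prop))]
  simp only [preimage_ofPred_eq, triangularMeasure_setOf_sq_add_sq_le (pow_le_one₀ h0 h1)]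
  rw [triangularMeasure, lintegral_withDensity_eq_lintegral_mul _ (by fun_prop) (by fun_prop)]
  calc ∫⁻ u, ENNReal.ofReal (1 - |u|) * ENNReal.ofReal (slice u)
      = ∫⁻ u in Icc (-l) l, ENNReal.ofReal ((1 - |u|) * slice u) := by
        rw [setLIntegral_eq_of_support_subset hsupp]
        exact lintegral_congr fun u => (ENNReal.ofReal_mul' (hslice_nonneg u)).symm
    _ = ENNReal.ofReal (∫ u in -l..l, (1 - |u|) * slice u) := by
        rw [← ofReal_integral_eq_lintegral_ofReal hcont.integrableOn_Icc
          ((ae_restrict_iff' measurableSet_Icc).2 (ae_of_all _ hnonneg)),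
          integral_Icc_eq_integral_Ioc, intervalIntegral.integral_of_le (by linarith)]
    _ = ENNReal.ofReal (π * l ^ 2 - (8 / 3) * l ^ 3 + l ^ 4 / 2) := by
        have heven := intervalIntegral.integral_comp_abs_symm
          (g := fun t => (1 - t) * (2 * √(l ^ 2 - t ^ 2) - √(l ^ 2 - t ^ 2) ^ 2)) (by fun_prop) h0
        simp only [sq_abs, integral_one_sub_mul_two_sqrt_sub_sq h0] at heven
        rw [heven]
        congr 1
        ring

theorem map_sub_restrict_unitSquare_prod :
    (volume.restrict ((Icc (0 : ℝ) 1 ×ˢ Icc (0 : ℝ) 1) ×ˢ (Icc (0 : ℝ) 1 ×ˢ Icc (0 : ℝ) 1))).map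
      (fun p : (ℝ × ℝ) × ℝ × ℝ => p.1 - p.2) = triangularMeasure.prod triangularMeasure := by
  set ν := volume.restrict (Icc (0 : ℝ) 1)
  rw [Measure.volume_eq_prod, ← Measure.prod_restrict, Measure.volume_eq_prod,
    ← Measure.prod_restrict]
  have hshuffle := measurePreserving_prodProdProdComm ν ν ν ν
  have hsub : Measurable fun p : ℝ × ℝ => p.1 - p.2 := by fun_prop
  have hdecomp : (fun p : (ℝ × ℝ) × ℝ × ℝ => p.1 - p.2)
      = Prod.map (fun p : ℝ × ℝ => p.1 - p.2) (fun p => p.1 - p.2) ∘ Equiv.prodProdProdComm _ _ _ _ :=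
    rfl
  rw [hdecomp, ← Measure.map_map (hsub.prodMap hsub) hshuffle.measurable, hshuffle.map_eq,
    ← Measure.map_prod_map _ _ hsub hsub, map_sub_prod_restrict_Icc]

/-- For `0 ≤ l ≤ 1`, the 4-dimensional Lebesgue measure of the set of pairs of points
of the unit square at Euclidean distance at most `l` equals `π·l² − (8/3)·l³ + l⁴/2`. -/
theorem stmt_2 (l : ℝ) (h0 : 0 ≤ l) (h1 : l ≤ 1) :
    volume (((Set.Icc (0:ℝ) 1 ×ˢ Set.Icc (0:ℝ) 1) ×ˢ (Set.Icc (0:ℝ) 1 ×ˢ Set.Icc (0:ℝ) 1)) ∩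
        {p : (ℝ × ℝ) × ℝ × ℝ | (p.1.1 - p.2.1) ^ 2 + (p.1.2 - p.2.2) ^ 2 ≤ l ^ 2})
      = ENNReal.ofReal (π * l ^ 2 - (8 / 3) * l ^ 3 + l ^ 4 / 2) := by
  have hdisk : MeasurableSet {q : ℝ × ℝ | q.1 ^ 2 + q.2 ^ 2 ≤ l ^ 2} :=
    measurableSet_le (by fun_prop) (by fun_prop)
  have hsub : Measurable fun p : (ℝ × ℝ) × ℝ × ℝ => p.1 - p.2 := by fun_prop
  rw [inter_comm]
  change volume ((fun p : (ℝ × ℝ) × ℝ × ℝ => p.1 - p.2) ⁻¹' {q | q.1 ^ 2 + q.2 ^ 2 ≤ l ^ 2} ∩ _) = _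
  rw [← Measure.restrict_apply (hdisk.preimage hsub), ← Measure.map_apply hsub hdisk,
    map_sub_restrict_unitSquare_prod, triangularMeasure_prod_setOf_sq_add_sq_le h0 h1]
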